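/- arXiv:1611.06546 — 9 statements merged into one kernel-verified Lean document; each statement's English description precedes it below -/
import Mathlib

section
/- A finite group G is an elementary abelian 3-group if and only if the following three conditions hold: (1) for each maximal subgroup M of G, the two non-trivial cosets of M are maximal sum-free sets in G; (2) every maximal sum-free set in G is a non-trivial coset of some maximal subgroup of G; and (3) the Frattini subgroup of G is trivial. -/
open Pointwise

/-- A subset `S` of a group is sum-free if for all `s₁, s₂ ∈ S`, `s₁ * s₂ ∉ S`. -/
def SumFree {G : Type*} [Group G] (S : Set G) : Prop :=
  ∀ a ∈ S, ∀ b ∈ S, a * b ∉ S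

/-- A maximal sum-free set: a (nonempty) sum-free set of maximum cardinality
among all sum-free subsets. -/
def IsMaxSumFree {G : Type*} [Group G] (S : Set G) : Prop :=
  S.Nonempty ∧ SumFree S ∧ ∀ T : Set G, SumFree T → T.ncard ≤ S.ncard

open Subgroup

/-
In an elementary abelian 3-group, a sum-free set `S` is disjoint from its translates `b • S` and
`b⁻¹ • S` for `b ∈ S` (these two are disjoint because `b * b = b⁻¹`), so `3 * |S| ≤ |G|`; every
maximal subgroup has index 3, so its non-trivial cosets attain this bound. At equality the three
translates partition `G`, which forces `b • S = S⁻¹` for every `b ∈ S`, so `S` is a coset of its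
stabiliser. A subgroup maximal among those avoiding `g ≠ 1` is a maximal subgroup, so the
Frattini subgroup is trivial.

Conversely, if every maximal subgroup has index 3, no subgroup has index 2, so the action on the
cosets of a maximal subgroup `M` lands in `A₃` and `M` is normal. Each `G ⧸ M` is cyclic of
order 3, so all commutators and cubes lie in the Frattini subgroup.
-/

theorem forall_pow_eq_one_iff_forall_orderOf_eq {G : Type*} [Group G] {p : ℕ} [Fact p.Prime] :
    (∀ g : G, g ^ p = 1) ↔ ∀ g : G, g ≠ 1 → orderOf g = p :=
  ⟨fun h g hg => orderOf_eq_prime (h g) hg, fun h g => by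
    rcases eq_or_ne g 1 with rfl | hg
    · exact one_pow p
    · exact h g hg ▸ pow_orderOf_eq_one g⟩

theorem mul_self_eq_inv_of_pow_three {G : Type*} [Group G] {g : G} (h : g ^ 3 = 1) :
    g * g = g⁻¹ :=
  (inv_eq_of_mul_eq_one_left (by rw [← pow_three', h])).symm

theorem mem_frattini_iff {G : Type*} [Group G] {g : G} :
    g ∈ frattini G ↔ ∀ M : Subgroup G, IsCoatom M → g ∈ M := by
  simp [frattini, Order.radical, mem_iInf]

namespace Subgroup

variable {G : Type*} [Group G]

theorem isCoatom_of_index_prime {M : Subgroup G} (hM : M.index.Prime) : IsCoatom M := by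
  have : M.FiniteIndex := ⟨hM.ne_zero⟩
  refine ⟨fun h => by simp [h, Nat.not_prime_one] at hM, fun K hMK => index_eq_one.1 ?_⟩
  exact (hM.eq_one_or_self_of_dvd _ (index_dvd_of_le hMK.le)).resolve_right
    (index_strictAnti hMK).ne

theorem ncard_smul_coe (M : Subgroup G) (x : G) :
    (x • (M : Set G)).ncard = Nat.card M := by
  rw [Set.ncard_smul_set, ← Nat.card_coe_set_eq]
  rfl

theorem normal_of_index_eq_three [Finite G] {M : Subgroup G} (hM : M.index = 3)
    (h2 : ∀ H : Subgroup G, H.index ≠ 2) : M.Normal := by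
  classical
  have : Fintype (G ⧸ M) := Fintype.ofFinite _
  have : Nontrivial (G ⧸ M) := by
    rw [← Finite.one_lt_card_iff_nontrivial, ← index_eq_card, hM]; norm_num
  let φ := MulAction.toPermHom G (G ⧸ M)
  have hsign : φ.range ≤ alternatingGroup (G ⧸ M) := by
    rintro _ ⟨g, rfl⟩
    have h : (Equiv.Perm.sign.comp φ).ker.index ∣ 2 := by
      rw [index_ker, ← Fintype.card_units_int, ← Nat.card_eq_fintype_card]
      exact card_subgroup_dvd_card _
    rcases (Nat.dvd_prime Nat.prime_two).1 h with h | h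
    · have hg : g ∈ (Equiv.Perm.sign.comp φ).ker := index_eq_one.1 h ▸ mem_top g
      exact Equiv.Perm.mem_alternatingGroup.2 hg
    · exact absurd h (h2 _)
  have hcore : M.normalCore.index ∣ 3 := by
    rw [normalCore_eq_ker, index_ker]
    convert card_dvd_of_le hsign
    rw [nat_card_alternatingGroup, ← index_eq_card, hM]; rfl
  have hcore3 : M.normalCore.index = M.index :=
    Nat.dvd_antisymm (hM ▸ hcore) (index_dvd_of_le M.normalCore_le)
  rw [← M.normalCore_le.lt_or_eq.resolve_left fun h => (index_strictAnti h).ne' hcore3]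
  exact M.normalCore_normal

end Subgroup

theorem commutator_le_frattini {G : Type*} [Group G] {p : ℕ} [Fact p.Prime]
    (h : ∀ M : Subgroup G, IsCoatom M → M.Normal ∧ M.index = p) :
    commutator G ≤ frattini G :=
  fun _ hx => mem_frattini_iff.2 fun M hM => by
    have := (h M hM).1
    have : Fact (Nat.card (G ⧸ M)).Prime := ⟨index_eq_card M ▸ (h M hM).2 ▸ Fact.out⟩
    have : IsCyclic (G ⧸ M) := isCyclic_of_prime_card rfl
    exact Subgroup.Normal.quotient_commutative_iff_commutator_le.1 inferInstance hx

theorem pow_mem_frattini {G : Type*} [Group G] {n : ℕ}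
    (h : ∀ M : Subgroup G, IsCoatom M → M.Normal ∧ M.index = n) (g : G) :
    g ^ n ∈ frattini G :=
  mem_frattini_iff.2 fun M hM => by
    have := (h M hM).1
    exact (h M hM).2 ▸ M.pow_index_mem g

section ElementaryAbelian

variable {G : Type*} [CommGroup G] {p : ℕ} [Fact p.Prime]

theorem Subgroup.index_eq_of_isCoatom (hG : ∀ g : G, g ^ p = 1) {M : Subgroup G}
    (hM : IsCoatom M) : M.index = p := by
  obtain ⟨x, hxM⟩ : ∃ x, x ∉ M := by
    by_contra! h
    exact hM.1 ((eq_top_iff' M).2 h)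
  have hsup : M ⊔ zpowers x = ⊤ := hM.2 _ (left_lt_sup.2 (by rwa [zpowers_le]))
  have hgen : ∀ z : G ⧸ M, z ∈ zpowers (x : G ⧸ M) := by
    intro z
    induction z using QuotientGroup.induction_on with | H z => ?_
    obtain ⟨m, hm, _, ⟨k, rfl⟩, rfl⟩ := mem_sup.1 (hsup ▸ mem_top z)
    exact ⟨k, by rw [QuotientGroup.mk_mul, (QuotientGroup.eq_one_iff m).2 hm, one_mul,
      QuotientGroup.mk_zpow]⟩
  rw [index_eq_card, ← orderOf_eq_card_of_forall_mem_zpowers hgen]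
  exact orderOf_eq_prime (by rw [← QuotientGroup.mk_pow, hG, QuotientGroup.mk_one])
    (by rwa [ne_eq, QuotientGroup.eq_one_iff])

theorem Subgroup.exists_isCoatom_notMem [Finite G] (hG : ∀ g : G, g ^ p = 1) {g : G}
    (hg : g ≠ 1) : ∃ K : Subgroup G, IsCoatom K ∧ g ∉ K := by
  obtain ⟨K, hgK, hK⟩ := (Set.toFinite {K : Subgroup G | g ∉ K}).exists_maximal ⟨⊥, by simpa⟩
  have hgL : ∀ L, K < L → g ∈ L := fun L hKL => by
    by_contra h
    exact hKL.not_ge (hK h hKL.le)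
  refine ⟨K, ⟨fun h => hgK (h ▸ mem_top g), fun L hKL => (eq_top_iff' L).2 fun y => ?_⟩, hgK⟩
  by_contra hyL
  have hyK : y ∉ K := fun h => hyL (hKL.le h)
  obtain ⟨k, hk, _, hi, hkg⟩ := mem_sup.1 (hgL _ (left_lt_sup.2 (by rwa [zpowers_le])))
  obtain ⟨i, rfl⟩ := (Submonoid.mem_powers_iff _ _).1 (mem_powers_iff_mem_zpowers.2 hi)
  have hyi : y ^ i ∈ L := by
    rw [eq_inv_mul_of_mul_eq hkg]
    exact L.mul_mem (hKL.le (K.inv_mem hk)) (hgL L hKL)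
  have hpi : ¬ p ∣ i := by
    rintro ⟨j, rfl⟩
    rw [pow_mul, hG, one_pow, mul_one] at hkg
    exact hgK (hkg ▸ hk)
  -- `y ^ i ∈ L` with `i` prime to `orderOf y = p`, so `y` itself is a power of `y ^ i`
  have hy : orderOf y = p := orderOf_eq_prime (hG y) (fun h => hyL (h ▸ L.one_mem))
  obtain ⟨m, hm⟩ := exists_pow_eq_self_of_coprime
    (hy ▸ Nat.coprime_comm.1 ((Nat.Prime.coprime_iff_not_dvd Fact.out).2 hpi))
  exact hyL (hm ▸ L.pow_mem hyi m)

theorem frattini_eq_bot_of_pow_eq_one [Finite G] (hG : ∀ g : G, g ^ p = 1) : frattini G = ⊥ :=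
  (Subgroup.eq_bot_iff_forall _).2 fun g hg => by
    by_contra hg1
    obtain ⟨K, hK, hgK⟩ := Subgroup.exists_isCoatom_notMem hG hg1
    exact hgK (mem_frattini_iff.1 hg K hK)

end ElementaryAbelian

namespace SumFree

variable {G : Type*} [Group G] {S : Set G} {b : G}

theorem one_notMem (hS : SumFree S) : (1 : G) ∉ S :=
  fun h => hS 1 h 1 h (by rwa [one_mul])

theorem disjoint_smul (hS : SumFree S) (hb : b ∈ S) : Disjoint S (b • S) :=
  Set.disjoint_left.2 fun x hx hbx => hS b hb _ (Set.mem_smul_set_iff_inv_smul_mem.1 hbx)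
    (by rwa [smul_eq_mul, mul_inv_cancel_left])

theorem disjoint_inv_smul (hS : SumFree S) (hb : b ∈ S) : Disjoint S (b⁻¹ • S) :=
  Set.disjoint_left.2 fun x hx hbx => hS b hb x hx (by
    rwa [Set.mem_smul_set_iff_inv_smul_mem, inv_inv, smul_eq_mul] at hbx)

theorem disjoint_smul_inv_smul (hS : SumFree S) (hb : b ∈ S) (hb3 : b ^ 3 = 1) :
    Disjoint (b • S) (b⁻¹ • S) := by
  refine Set.disjoint_left.2 fun x hx hx' => hS b hb (b * x) ?_ ?_
  · rwa [Set.mem_smul_set_iff_inv_smul_mem, inv_inv, smul_eq_mul] at hx'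
  · rwa [← mul_assoc, mul_self_eq_inv_of_pow_three hb3, ← smul_eq_mul,
      ← Set.mem_smul_set_iff_inv_smul_mem]

variable [Finite G]

theorem ncard_union_smul_union_inv_smul (hS : SumFree S) (hb : b ∈ S) (hb3 : b ^ 3 = 1) :
    (S ∪ b • S ∪ b⁻¹ • S).ncard = 3 * S.ncard := by
  rw [Set.ncard_union_eq ((hS.disjoint_inv_smul hb).union_left
      (hS.disjoint_smul_inv_smul hb hb3)),
    Set.ncard_union_eq (hS.disjoint_smul hb), Set.ncard_smul_set, Set.ncard_smul_set]
  ring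

theorem three_mul_ncard_le (hS : SumFree S) (hG : ∀ g : G, g ^ 3 = 1) :
    3 * S.ncard ≤ Nat.card G := by
  obtain rfl | ⟨b, hb⟩ := S.eq_empty_or_nonempty
  · simp
  rw [← hS.ncard_union_smul_union_inv_smul hb (hG b), ← Set.ncard_univ]
  exact Set.ncard_le_ncard (Set.subset_univ _)

theorem union_smul_union_inv_smul_eq_univ (hS : SumFree S) (hb : b ∈ S) (hb3 : b ^ 3 = 1)
    (h3 : 3 * S.ncard = Nat.card G) : S ∪ b • S ∪ b⁻¹ • S = Set.univ :=
  Set.eq_of_subset_of_ncard_le (Set.subset_univ _)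
    (by rw [hS.ncard_union_smul_union_inv_smul hb hb3, h3, Set.ncard_univ])

end SumFree

theorem sumFree_smul_subgroup {G : Type*} [Group G] {M : Subgroup G} {x : G} (hx : x ∉ M) :
    SumFree (x • (M : Set G)) := by
  intro u hu v hv huv
  simp only [Set.mem_smul_set_iff_inv_smul_mem, smul_eq_mul, SetLike.mem_coe] at hu hv huv
  have : x = (x⁻¹ * u)⁻¹ * (x⁻¹ * (u * v)) * (x⁻¹ * v)⁻¹ := by group
  exact hx (this ▸ M.mul_mem (M.mul_mem (M.inv_mem hu) huv) (M.inv_mem hv))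

theorem isMaxSumFree_smul_subgroup {G : Type*} [Group G] [Finite G] (hG : ∀ g : G, g ^ 3 = 1)
    {M : Subgroup G} (hM : M.index = 3) {x : G} (hx : x ∉ M) :
    IsMaxSumFree (x • (M : Set G)) := by
  refine ⟨(M : Set G).nonempty_of_mem M.one_mem |>.smul_set, sumFree_smul_subgroup hx,
    fun T hT => ?_⟩
  have := hT.three_mul_ncard_le hG
  rw [← M.card_mul_index, hM] at this
  rw [M.ncard_smul_coe]
  omega

namespace SumFree

variable {G : Type*} [CommGroup G] [Finite G] {S : Set G}

theorem inv_mul_inv_mem (hS : SumFree S) (hG : ∀ g : G, g ^ 3 = 1)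
    (h3 : 3 * S.ncard = Nat.card G) {s t : G} (hs : s ∈ S) (ht : t ∈ S) : s⁻¹ * t⁻¹ ∈ S := by
  rcases (hS.union_smul_union_inv_smul_eq_univ hs (hG s) h3).ge (Set.mem_univ (s⁻¹ * t⁻¹))
    with (h | h) | h
  · exact h
  · rw [Set.mem_smul_set_iff_inv_smul_mem, smul_eq_mul] at h
    have hst : s⁻¹ * (s⁻¹ * t⁻¹) * t = s := by
      rw [mul_assoc, inv_mul_cancel_right, ← mul_inv_rev, mul_self_eq_inv_of_pow_three (hG s),
        inv_inv]
    exact (hS _ h t ht (by rwa [hst])).elim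
  · rw [Set.mem_smul_set_iff_inv_smul_mem, inv_inv, smul_eq_mul, mul_inv_cancel_left] at h
    have htt : t⁻¹ * t⁻¹ = t := by
      rw [← mul_inv_rev, mul_self_eq_inv_of_pow_three (hG t), inv_inv]
    exact (hS _ h _ h (by rwa [htt])).elim

theorem smul_eq_inv (hS : SumFree S) (hG : ∀ g : G, g ^ 3 = 1)
    (h3 : 3 * S.ncard = Nat.card G) {b : G} (hb : b ∈ S) : b • S = S⁻¹ := by
  refine Set.eq_of_subset_of_ncard_le (fun x hx => ?_) (by rw [Set.ncard_inv, Set.ncard_smul_set])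
  rw [Set.mem_smul_set_iff_inv_smul_mem, smul_eq_mul] at hx
  have := hS.inv_mul_inv_mem hG h3 hx hb
  rwa [mul_inv_rev, inv_inv, mul_inv_cancel_right, ← Set.mem_inv] at this

theorem exists_eq_smul_subgroup (hS : SumFree S) (hG : ∀ g : G, g ^ 3 = 1)
    (h3 : 3 * S.ncard = Nat.card G) :
    ∃ M : Subgroup G, M.index = 3 ∧ ∃ x ∉ M, S = x • (M : Set G) := by
  obtain ⟨a, ha⟩ : S.Nonempty :=
    Set.nonempty_of_ncard_ne_zero (by have := Nat.card_pos (α := G); omega)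
  set M := MulAction.stabilizer G S
  have hSM : S = a • (M : Set G) := by
    ext s
    rw [Set.mem_smul_set_iff_inv_smul_mem, smul_eq_mul, SetLike.mem_coe,
      MulAction.mem_stabilizer_iff]
    constructor
    · intro hs
      rw [mul_smul, hS.smul_eq_inv hG h3 hs, ← hS.smul_eq_inv hG h3 ha, inv_smul_smul]
    · intro hs
      have := Set.smul_mem_smul_set (a := a⁻¹ * s) ha
      rwa [hs, smul_eq_mul, mul_comm, mul_inv_cancel_left] at this
  have hidx : Nat.card M * M.index = Nat.card M * 3 := by
    rw [M.card_mul_index, ← h3, hSM, M.ncard_smul_coe, mul_comm]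
  refine ⟨M, Nat.eq_of_mul_eq_mul_left Nat.card_pos hidx, a, fun haM => hS.one_notMem ?_, hSM⟩
  rw [hSM, Set.mem_smul_set_iff_inv_smul_mem, smul_eq_mul, mul_one]
  exact M.inv_mem haM

end SumFree

theorem IsMaxSumFree.exists_eq_smul_subgroup {G : Type*} [CommGroup G] [Finite G]
    (hG : ∀ g : G, g ^ 3 = 1) {S : Set G} (hS : IsMaxSumFree S) :
    ∃ M : Subgroup G, IsCoatom M ∧ ∃ x ∉ M, S = x • (M : Set G) := by
  obtain ⟨⟨a, ha⟩, hSF, hmax⟩ := hS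
  have : Fact (Nat.Prime 3) := ⟨Nat.prime_three⟩
  obtain ⟨K, hK, haK⟩ := Subgroup.exists_isCoatom_notMem hG fun h => hSF.one_notMem (h ▸ ha)
  have hKS := hmax _ (sumFree_smul_subgroup haK)
  have hKG := K.card_mul_index
  rw [K.ncard_smul_coe] at hKS
  rw [Subgroup.index_eq_of_isCoatom hG hK] at hKG
  obtain ⟨M, hM, x, hxM, rfl⟩ :=
    hSF.exists_eq_smul_subgroup hG (le_antisymm (hSF.three_mul_ncard_le hG) (by omega))
  exact ⟨M, Subgroup.isCoatom_of_index_prime (hM ▸ Nat.prime_three), x, hxM, rfl⟩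

theorem elementary_abelian_three_characterisation (G : Type*) [Group G] [Finite G] :
    ((∀ a b : G, a * b = b * a) ∧ ∀ g : G, g ≠ 1 → orderOf g = 3) ↔
      ((∀ M : Subgroup G, IsCoatom M →
          M.index = 3 ∧ ∀ x : G, x ∉ M → IsMaxSumFree (x • (M : Set G))) ∧
        (∀ S : Set G, IsMaxSumFree S →
          ∃ M : Subgroup G, IsCoatom M ∧ ∃ x : G, x ∉ M ∧ S = x • (M : Set G)) ∧
        (⨅ M ∈ {M : Subgroup G | IsCoatom M}, M) = ⊥) := by
  have : Fact (Nat.Prime 3) := ⟨Nat.prime_three⟩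
  constructor
  · rintro ⟨hcomm, hord⟩
    let _ : CommGroup G := { ‹Group G› with mul_comm := hcomm }
    have hG : ∀ g : G, g ^ 3 = 1 := forall_pow_eq_one_iff_forall_orderOf_eq.2 hord
    have hidx (M : Subgroup G) (hM : IsCoatom M) := Subgroup.index_eq_of_isCoatom hG hM
    exact ⟨fun M hM => ⟨hidx M hM, fun x => isMaxSumFree_smul_subgroup hG (hidx M hM)⟩,
      fun S => IsMaxSumFree.exists_eq_smul_subgroup hG, frattini_eq_bot_of_pow_eq_one hG⟩
  · rintro ⟨hidx, -, hΦ⟩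
    have hcoatom (M : Subgroup G) (hM : IsCoatom M) : M.Normal ∧ M.index = 3 := by
      refine ⟨Subgroup.normal_of_index_eq_three (hidx M hM).1 fun H hH => ?_, (hidx M hM).1⟩
      have := (hidx H (Subgroup.isCoatom_of_index_prime (hH ▸ Nat.prime_two))).1
      omega
    have : IsMulCommutative G :=
      (commutator_eq_bot_iff G).1 (le_bot_iff.1 (hΦ ▸ commutator_le_frattini hcoatom))
    refine ⟨mul_comm', forall_pow_eq_one_iff_forall_orderOf_eq.1 fun g => ?_⟩
    exact (Subgroup.mem_bot).1 (hΦ ▸ pow_mem_frattini hcoatom g)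
end

section
/- For every natural number n ≥ 1, the number of maximal sum-free sets in the elementary abelian 3-group of rank n (i.e., (ℤ/3ℤ)^n) is 3^n − 1. -/
/-- A subset `S` of an additive group is sum-free if for all `s₁, s₂ ∈ S`, `s₁ + s₂ ∉ S`. -/
def AddSumFree {G : Type*} [AddGroup G] (S : Set G) : Prop :=
  ∀ a ∈ S, ∀ b ∈ S, a + b ∉ S

/-- A maximal sum-free set: a (nonempty) sum-free set of maximum cardinality
among all sum-free subsets. -/
def IsMaxAddSumFree {G : Type*} [AddGroup G] (S : Set G) : Prop :=
  S.Nonempty ∧ AddSumFree S ∧ ∀ T : Set G, AddSumFree T → T.ncard ≤ S.ncard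

namespace MaxSF

variable {n : ℕ}

lemma three_eq_zero (v : Fin n → ZMod 3) : v + v + v = 0 := by
  funext i
  have h : ∀ a : ZMod 3, a + a + a = 0 := by decide
  simpa using h (v i)

lemma card_G : Nat.card (Fin n → ZMod 3) = 3 ^ n := by
  simp [Nat.card_eq_fintype_card, Fintype.card_fun, ZMod.card]

def phi (c x : Fin n → ZMod 3) : ZMod 3 := ∑ i, x i * c i

lemma phi_add (c x y : Fin n → ZMod 3) : phi c (x + y) = phi c x + phi c y := by
  simp [phi, add_mul, Finset.sum_add_distrib]

lemma phi_single (c : Fin n → ZMod 3) (i : Fin n) (a : ZMod 3) :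
    phi c (Pi.single i a) = a * c i := by
  simp [phi, Pi.single_apply]

lemma phi_sub (c x y : Fin n → ZMod 3) : phi c (x - y) = phi c x - phi c y := by
  simp [phi, sub_mul, Finset.sum_sub_distrib]

/-- existence of a point with value 1 -/
lemma phi_exists_one {c : Fin n → ZMod 3} (hc : c ≠ 0) : ∃ x, phi c x = 1 := by
  haveI : Fact (Nat.Prime 3) := ⟨by norm_num⟩
  obtain ⟨j, hj⟩ : ∃ j, c j ≠ 0 := by
    by_contra h
    push_neg at h
    exact hc (funext h)
  exact ⟨Pi.single j (c j)⁻¹, by rw [phi_single]; exact inv_mul_cancel₀ hj⟩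

/-- all fibers of `phi c` have the same ncard when `c ≠ 0` -/
lemma fiber_ncard_eq {c : Fin n → ZMod 3} (hc : c ≠ 0) (a b : ZMod 3) :
    {x | phi c x = a}.ncard = {x | phi c x = b}.ncard := by
  obtain ⟨x₀, hx₀⟩ := phi_exists_one hc
  have key : ∀ u v : ZMod 3, {x | phi c x = v} = (fun x => x + (v - u) • x₀) '' {x | phi c x = u} := by
    intro u v
    have hnat : ∀ (k : ℕ) (y : Fin n → ZMod 3), phi c (k • y) = (k : ZMod 3) * phi c y := by
      intro k y
      induction k with
      | zero => simp [phi]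
      | succ k ih =>
          rw [succ_nsmul, phi_add, ih, Nat.cast_succ]
          ring
    have hsm : ∀ (d : ZMod 3) (y : Fin n → ZMod 3), phi c (d • y) = d * phi c y := by
      intro d y
      have h1 : d • y = d.val • y := by
        rw [← Nat.cast_smul_eq_nsmul (ZMod 3), ZMod.natCast_val, ZMod.cast_id]
      rw [h1, hnat, ZMod.natCast_val, ZMod.cast_id]
    ext x
    constructor
    · intro hx
      simp only [Set.mem_setOf_eq] at hx
      refine ⟨x - (v - u) • x₀, ?_, sub_add_cancel x ((v - u) • x₀)⟩
      simp only [Set.mem_setOf_eq]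
      rw [phi_sub, hsm, hx₀, hx]
      ring
    · rintro ⟨y, hy, rfl⟩
      simp only [Set.mem_setOf_eq] at hy ⊢
      rw [phi_add, hy, hsm, hx₀]
      ring
  rw [key a b]
  exact (Set.ncard_image_of_injective _ (add_left_injective _)).symm

/-- fibers partition, hence each has size 3^(n-1) -/
lemma fiber_ncard {c : Fin n → ZMod 3} (hc : c ≠ 0) (hn : 1 ≤ n) (a : ZMod 3) :
    {x | phi c x = a}.ncard = 3 ^ (n - 1) := by
  have htri : ∀ z : ZMod 3, z = 0 ∨ z = 1 ∨ z = 2 := by decide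
  have hunion : (Set.univ : Set (Fin n → ZMod 3)) =
      {x | phi c x = 0} ∪ {x | phi c x = 1} ∪ {x | phi c x = 2} := by
    ext x
    simp only [Set.mem_univ, Set.mem_union, Set.mem_setOf_eq, true_iff]
    rcases htri (phi c x) with h | h | h <;> tauto
  have hd1 : Disjoint {x | phi c x = 0} {x : Fin n → ZMod 3 | phi c x = 1} := by
    rw [Set.disjoint_left]; intro x h1 h2
    simp only [Set.mem_setOf_eq] at h1 h2; rw [h1] at h2; exact absurd h2 (by decide)
  have hd2 : Disjoint ({x | phi c x = 0} ∪ {x | phi c x = 1}) {x : Fin n → ZMod 3 | phi c x = 2} := by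
    rw [Set.disjoint_left]; intro x h1 h2
    simp only [Set.mem_union, Set.mem_setOf_eq] at h1 h2
    rcases h1 with h | h <;> rw [h2] at h <;> exact absurd h (by decide)
  have hcard : 3 ^ n = 3 * {x | phi c x = a}.ncard := by
    have := Set.ncard_univ (Fin n → ZMod 3)
    rw [hunion] at this
    rw [Set.ncard_union_eq hd2, Set.ncard_union_eq hd1, card_G] at this
    rw [← this, fiber_ncard_eq hc 0 a, fiber_ncard_eq hc 1 a, fiber_ncard_eq hc 2 a]
    ring
  have h3n : 3 ^ n = 3 * 3 ^ (n - 1) := by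
    conv_lhs => rw [show n = (n - 1) + 1 by omega]
    rw [pow_succ]; ring
  omega

/-- upper bound: three disjoint translates -/
lemma sumfree_ncard_le (T : Set (Fin n → ZMod 3)) (hT : AddSumFree T) :
    3 * T.ncard ≤ 3 ^ n := by
  rcases T.eq_empty_or_nonempty with rfl | ⟨s, hs⟩
  · simp
  · set T1 := (fun x => x + s) '' T with hT1
    set T2 := (fun x => x - s) '' T with hT2
    have hd1 : Disjoint T T1 := by
      rw [Set.disjoint_left]
      rintro x hx ⟨t, ht, rfl⟩
      exact hT t ht s hs hx
    have hd2 : Disjoint T T2 := by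
      rw [Set.disjoint_left]
      rintro x hx ⟨t, ht, rfl⟩
      have h := hT (t - s) hx s hs
      rw [sub_add_cancel] at h
      exact h ht
    have hd3 : Disjoint T1 T2 := by
      rw [Set.disjoint_left]
      rintro x ⟨a, ha, rfl⟩ ⟨b, hb, hba⟩
      simp only at hba
      -- b - s = a + s  ⇒  b + s = a
      have hb' : b + s = a := by
        have e : b + s = b - s - s + (s + s + s) := by abel
        rw [e, three_eq_zero s, add_zero, hba]
        abel
      exact hT b hb s hs (hb' ▸ ha)
    have e1 : T1.ncard = T.ncard := Set.ncard_image_of_injective _ (add_left_injective s)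
    have e2 : T2.ncard = T.ncard := Set.ncard_image_of_injective _ (sub_left_injective)
    have hsub : (T ∪ T1 ∪ T2).ncard ≤ 3 ^ n := by
      rw [← card_G, ← Set.ncard_univ]
      exact Set.ncard_le_ncard (Set.subset_univ _) Set.finite_univ
    rw [Set.ncard_union_eq (by rw [Set.disjoint_union_left]; exact ⟨hd2, hd3⟩),
        Set.ncard_union_eq hd1, e1, e2] at hsub
    omega

lemma structure_lemma (S : Set (Fin n → ZMod 3)) (hSF : AddSumFree S)
    (hcard : S.ncard = 3 ^ (n - 1)) (hne : S.Nonempty) (hn : 1 ≤ n) :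
    ∃ c : Fin n → ZMod 3, c ≠ 0 ∧ {x | phi c x = 1} = S := by
  classical
  obtain ⟨s₀, hs₀⟩ := hne
  set C : Set (Fin n → ZMod 3) := {x | x ∉ S ∧ -x ∉ S} with hCdef
  have hnegS : ∀ x ∈ S, -x ∉ S := by
    intro x hx
    have h := hSF x hx x hx
    have e : x + x = -x := by
      have h3 := three_eq_zero x
      have e2 : x + x = -x + (x + x + x) := by abel
      rw [e2, h3, add_zero]
    rwa [e] at h
  have hsub : ∀ s ∈ S, (fun x => x - s) '' S ⊆ C := by
    rintro s hs x ⟨t, ht, rfl⟩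
    constructor
    · intro hmem
      have h := hSF (t - s) hmem s hs
      rw [sub_add_cancel] at h; exact h ht
    · intro hmem
      rw [neg_sub] at hmem
      have h := hSF (s - t) hmem t ht
      rw [sub_add_cancel] at h; exact h hs
  have hCcard : C.ncard = 3 ^ (n - 1) := by
    have hCeq : C = (S ∪ Neg.neg '' S)ᶜ := by
      ext x
      simp only [hCdef, Set.mem_setOf_eq, Set.mem_compl_iff, Set.mem_union, Set.mem_image]
      constructor
      · rintro ⟨h1, h2⟩ (h | ⟨u, hu, rfl⟩)
        · exact h1 h
        · rw [neg_neg] at h2; exact h2 hu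
      · intro h
        push_neg at h
        exact ⟨h.1, fun hmem => h.2 (-x) hmem (neg_neg x)⟩
    have hdisj : Disjoint S (Neg.neg '' S) := by
      rw [Set.disjoint_left]
      rintro x hx ⟨u, hu, rfl⟩
      rw [← neg_neg u] at hu
      exact hnegS (-u) hx hu
    have hu : (S ∪ Neg.neg '' S).ncard = 2 * 3 ^ (n - 1) := by
      rw [Set.ncard_union_eq hdisj, Set.ncard_image_of_injective _ neg_injective, hcard]
      ring
    have hcompl := Set.ncard_add_ncard_compl (S ∪ Neg.neg '' S)
    rw [hu, card_G] at hcompl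
    have h3n : 3 ^ n = 3 * 3 ^ (n - 1) := by
      conv_lhs => rw [show n = (n - 1) + 1 by omega]
      rw [pow_succ]; ring
    rw [hCeq]
    omega
  have hKey : ∀ s ∈ S, (fun x => x - s) '' S = C := by
    intro s hs
    apply Set.eq_of_subset_of_ncard_le (hsub s hs)
    rw [hCcard, Set.ncard_image_of_injective _ sub_left_injective, hcard]
  -- containment lemmas
  have htri : ∀ x, x ∈ S ∨ -x ∈ S ∨ x ∈ C := by
    intro x
    by_cases h1 : x ∈ S
    · tauto
    by_cases h2 : -x ∈ S <;> tauto
  have hA : ∀ x ∈ S, ∀ y ∈ S, -(x + y) ∈ S := by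
    intro x hx y hy
    have h1 : x + y ∉ S := hSF x hx y hy
    have h2 : x + y ∉ C := by
      intro hmem
      rw [← hKey y hy] at hmem
      obtain ⟨t, ht, hts⟩ := hmem
      simp only at hts
      have e : t + y = x := by
        have e2 : t + y = (t - y) + (y + y + y) - y := by abel
        rw [e2, three_eq_zero y, add_zero, hts]
        abel
      exact hSF t ht y hy (by rw [e]; exact hx)
    by_cases h : -(x + y) ∈ S
    · exact h
    · exact absurd (⟨h1, h⟩ : x + y ∈ C) h2
  have hB : ∀ x ∈ S, ∀ y, -y ∈ S → x + y ∈ C := by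
    intro x hx y hy
    rw [← hKey (-y) hy]
    exact ⟨x, hx, by show x - -y = x + y; abel⟩
  have hCadd : ∀ x ∈ S, ∀ y ∈ C, x + y ∈ S := by
    intro x hx y hy
    rw [← hKey x hx] at hy
    obtain ⟨t, ht, rfl⟩ := hy
    have e : x + (t - x) = t := by abel
    rw [e]; exact ht
  have hD : ∀ x y, -x ∈ S → -y ∈ S → x + y ∈ S := by
    intro x y hx hy
    have h := hA _ hx _ hy
    rwa [show -(-x + -y) = x + y by abel] at h
  have hCsymm : ∀ x ∈ C, -x ∈ C := by
    intro x hx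
    exact ⟨hx.2, by rw [neg_neg]; exact hx.1⟩
  have hE : ∀ x y, -x ∈ S → y ∈ C → -(x + y) ∈ S := by
    intro x y hx hy
    have h := hCadd _ hx _ (hCsymm y hy)
    rwa [show -x + -y = -(x + y) by abel] at h
  have hF : ∀ x ∈ C, ∀ y ∈ C, x + y ∈ C := by
    intro x hx y hy
    rw [← hKey s₀ hs₀] at hx hy
    obtain ⟨u, hu, rfl⟩ := hx
    obtain ⟨v, hv, rfl⟩ := hy
    have hw := hA u hu v hv
    have e : u - s₀ + (v - s₀) = s₀ - (-(u + v)) - (s₀ + s₀ + s₀) := by abel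
    simp only
    rw [e, three_eq_zero s₀, sub_zero, ← hKey _ hw]
    exact ⟨s₀, hs₀, rfl⟩
  -- the classifying function
  set ψ : (Fin n → ZMod 3) → ZMod 3 :=
    fun x => if x ∈ S then 1 else if -x ∈ S then 2 else 0 with hψdef
  have hψS : ∀ x ∈ S, ψ x = 1 := by intro x hx; simp [hψdef, hx]
  have hψN : ∀ x, -x ∈ S → ψ x = 2 := by
    intro x hx
    have hxS : x ∉ S := fun h => hnegS x h hx
    simp [hψdef, hxS, hx]
  have hψC : ∀ x ∈ C, ψ x = 0 := by
    intro x hx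
    simp [hψdef, hx.1, hx.2]
  have hadd : ∀ x y, ψ (x + y) = ψ x + ψ y := by
    intro x y
    rcases htri x with hx | hx | hx <;> rcases htri y with hy | hy | hy
    · rw [hψS x hx, hψS y hy, hψN _ (hA x hx y hy)]; decide
    · rw [hψS x hx, hψN y hy, hψC _ (hB x hx y hy)]; decide
    · rw [hψS x hx, hψC y hy, hψS _ (hCadd x hx y hy)]; decide
    · rw [hψN x hx, hψS y hy, hψC _ (by rw [add_comm]; exact hB y hy x hx)]; decide
    · rw [hψN x hx, hψN y hy, hψS _ (hD x y hx hy)]; decide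
    · rw [hψN x hx, hψC y hy, hψN _ (hE x y hx hy)]; decide
    · rw [hψC x hx, hψS y hy, hψS _ (by rw [add_comm]; exact hCadd y hy x hx)]; decide
    · rw [hψC x hx, hψN y hy, hψN _ (by rw [add_comm]; exact hE y x hy hx)]; decide
    · rw [hψC x hx, hψC y hy, hψC _ (hF x hx y hy)]; decide
  let Ψ : (Fin n → ZMod 3) →+ ZMod 3 := AddMonoidHom.mk' ψ hadd
  have hΨ : ∀ x, Ψ x = ψ x := fun _ => rfl
  set c : Fin n → ZMod 3 := fun i => ψ (Pi.single i 1) with hcdef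
  have hsm : ∀ (a : ZMod 3) (y : Fin n → ZMod 3), ψ (a • y) = a * ψ y := by
    intro a y
    have h1 : a • y = a.val • y := by
      rw [← Nat.cast_smul_eq_nsmul (ZMod 3), ZMod.natCast_val, ZMod.cast_id]
    calc ψ (a • y) = Ψ (a.val • y) := by rw [hΨ, h1]
    _ = a.val • Ψ y := map_nsmul Ψ a.val y
    _ = (a.val : ZMod 3) * ψ y := by rw [nsmul_eq_mul, hΨ]
    _ = a * ψ y := by rw [ZMod.natCast_val, ZMod.cast_id]
  have hphi : ∀ x, phi c x = ψ x := by
    intro x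
    conv_rhs => rw [← Finset.univ_sum_single x, ← hΨ, map_sum]
    unfold phi
    apply Finset.sum_congr rfl
    intro i _
    have hsingle : Pi.single i (x i) = x i • (Pi.single i 1 : Fin n → ZMod 3) := by
      funext j
      simp [Pi.single_apply, mul_ite]
    rw [hΨ, hsingle, hsm]
  refine ⟨c, ?_, ?_⟩
  · intro h0
    have h1 : ψ s₀ = 1 := hψS s₀ hs₀
    have h2 : phi c s₀ = 0 := by simp [phi, h0]
    rw [hphi] at h2
    rw [h1] at h2
    exact absurd h2 (by decide)
  · ext x
    simp only [Set.mem_setOf_eq, hphi]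
    constructor
    · intro h1
      rcases htri x with hx | hx | hx
      · exact hx
      · rw [hψN x hx] at h1; exact absurd h1 (by decide)
      · rw [hψC x hx] at h1; exact absurd h1 (by decide)
    · intro hx; exact hψS x hx

lemma h3n (hn : 1 ≤ n) : 3 ^ n = 3 * 3 ^ (n - 1) := by
  conv_lhs => rw [show n = (n - 1) + 1 by omega]
  rw [pow_succ]; ring

lemma maxsf_of (hn : 1 ≤ n) {c : Fin n → ZMod 3} (hc : c ≠ 0) :
    IsMaxAddSumFree {x | phi c x = 1} := by
  obtain ⟨x₀, hx₀⟩ := phi_exists_one hc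
  refine ⟨⟨x₀, hx₀⟩, ?_, ?_⟩
  · intro a ha b hb h
    simp only [Set.mem_setOf_eq] at ha hb h
    rw [phi_add, ha, hb] at h
    exact absurd h (by decide)
  · intro T hT
    have h1 := sumfree_ncard_le T hT
    rw [fiber_ncard hc hn 1]
    have h2 := h3n hn
    omega

lemma inj_on : Set.InjOn (fun c : Fin n → ZMod 3 => {x | phi c x = 1})
    {c : Fin n → ZMod 3 | c ≠ 0} := by
  intro c hc d hd h
  simp only [Set.mem_setOf_eq] at hc hd
  have hiff : ∀ x, phi c x = 1 ↔ phi d x = 1 := by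
    intro x
    have := Set.ext_iff.mp h x
    simpa using this
  have hpt : ∀ x, phi c x = phi d x := by
    obtain ⟨x₀, hx₀⟩ := phi_exists_one hc
    have hx₀d : phi d x₀ = 1 := (hiff x₀).mp hx₀
    intro x
    have htri : ∀ z : ZMod 3, z = 0 ∨ z = 1 ∨ z = 2 := by decide
    rcases htri (phi c x) with h0 | h1 | h2
    · have hc1 : phi c (x + x₀) = 1 := by rw [phi_add, h0, hx₀]; ring
      have hd1 := (hiff (x + x₀)).mp hc1
      rw [phi_add, hx₀d] at hd1
      rw [h0]
      have hz : ∀ z : ZMod 3, z + 1 = 1 → z = 0 := by decide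
      exact (hz _ hd1).symm
    · rw [h1, (hiff x).mp h1]
    · have hc1 : phi c (x + x) = 1 := by
        rw [phi_add, h2]; decide
      have hd1 := (hiff (x + x)).mp hc1
      rw [phi_add] at hd1
      rw [h2]
      have hz : ∀ z : ZMod 3, z + z = 1 → z = 2 := by decide
      exact (hz _ hd1).symm
  funext i
  have hpi := hpt (Pi.single i 1)
  rwa [phi_single, phi_single, one_mul, one_mul] at hpi

end MaxSF

/-- The number of maximal sum-free sets in `(ℤ/3ℤ)^n` is `3^n - 1`. -/
theorem card_maxSumFree_elementary_abelian_three (n : ℕ) (hn : 1 ≤ n) :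
    {S : Set (Fin n → ZMod 3) | IsMaxAddSumFree S}.ncard = 3 ^ n - 1 := by
  classical
  have hset : {S : Set (Fin n → ZMod 3) | IsMaxAddSumFree S}
      = (fun c : Fin n → ZMod 3 => {x | MaxSF.phi c x = 1}) '' {c | c ≠ 0} := by
    ext S
    simp only [Set.mem_setOf_eq, Set.mem_image]
    constructor
    · intro hS
      have hub := MaxSF.sumfree_ncard_le S hS.2.1
      have c0 : (Pi.single (⟨0, hn⟩ : Fin n) 1 : Fin n → ZMod 3) ≠ 0 := by
        intro h
        have h1 := congrFun h ⟨0, hn⟩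
        simp [Pi.single_apply] at h1
      have hmax0 := MaxSF.maxsf_of hn c0
      have hlb := hS.2.2 _ hmax0.2.1
      rw [MaxSF.fiber_ncard c0 hn 1] at hlb
      have h2 := MaxSF.h3n hn
      have hcard : S.ncard = 3 ^ (n - 1) := by omega
      obtain ⟨c, hc, hceq⟩ := MaxSF.structure_lemma S hS.2.1 hcard hS.1 hn
      exact ⟨c, hc, hceq⟩
    · rintro ⟨c, hc, rfl⟩
      exact MaxSF.maxsf_of hn hc
  rw [hset, Set.ncard_image_of_injOn MaxSF.inj_on]
  have heq : {c : Fin n → ZMod 3 | c ≠ 0} = Set.univ \ {0} := by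
    ext c; simp
  rw [heq, Set.ncard_diff_singleton_of_mem (Set.mem_univ 0), Set.ncard_univ, MaxSF.card_G]
end

section
/- For every natural number n ≥ 1, the number of maximal sum-free sets in the elementary abelian 2-group of rank n (i.e., (ℤ/2ℤ)^n) is 2^n − 1. -/
namespace MySF
variable {n : ℕ}
abbrev G (n : ℕ) := Fin n → ZMod 2

lemma z2 (x : ZMod 2) : x = 0 ∨ x = 1 := by revert x; decide

def L (w v : G n) : ZMod 2 := ∑ i, w i * v i

lemma L_add (w a b : G n) : L w (a + b) = L w a + L w b := by
  simp [L, mul_add, Finset.sum_add_distrib]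

lemma L_single (w : G n) (i : Fin n) (c : ZMod 2) : L w (Pi.single i c) = w i * c := by
  simp [L, Pi.single_apply, Finset.sum_ite_eq]

lemma card_G : Nat.card (G n) = 2 ^ n := by
  simp [Nat.card_eq_fintype_card]

lemma gadd_self (a : G n) : a + a = 0 := by
  funext i
  have : ∀ x : ZMod 2, x + x = 0 := by decide
  exact this (a i)

def Sw (w : G n) : Set (G n) := {v | L w v = 1}

lemma sw_sumFree (w : G n) : AddSumFree (Sw w) := by
  intro a ha b hb hab
  have : (1 : ZMod 2) = 1 + 1 := by
    have := L_add w a b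
    rw [hab, ha, hb] at this
    exact this
  exact absurd this (by decide)

lemma exists_mem_sw {w : G n} (hw : w ≠ 0) : ∃ x, x ∈ Sw w := by
  have : ∃ i, w i ≠ 0 := by
    by_contra h
    push_neg at h
    exact hw (funext h)
  obtain ⟨i, hi⟩ := this
  have hwi : w i = 1 := (z2 (w i)).resolve_left hi
  refine ⟨Pi.single i 1, ?_⟩
  show L w (Pi.single i 1) = 1
  rw [L_single, hwi, one_mul]

lemma compl_sw {w : G n} {x : G n} (hx : x ∈ Sw w) :
    (fun v => v + x) '' Sw w = (Sw w)ᶜ := by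
  have hx1 : L w x = 1 := hx
  ext u
  constructor
  · rintro ⟨v, hv, rfl⟩
    have hv1 : L w v = 1 := hv
    intro hmem
    have : L w (v + x) = 1 := hmem
    rw [L_add, hv1, hx1] at this
    exact absurd this (by decide)
  · intro hu
    refine ⟨u + x, ?_, by show u + x + x = u; rw [add_assoc, gadd_self, add_zero]⟩
    have hu0 : L w u = 0 := by
      rcases z2 (L w u) with h | h
      · exact h
      · exact absurd h hu
    show L w (u + x) = 1
    rw [L_add, hu0, hx1, zero_add]

lemma sw_ncard {w : G n} (hw : w ≠ 0) : (Sw w).ncard = 2 ^ (n - 1) := by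
  obtain ⟨x, hx⟩ := exists_mem_sw hw
  have hinj : Function.Injective (fun v : G n => v + x) := fun a b h => by
    simpa using congrArg (fun y => y + x) h
  have h1 : ((Sw w)ᶜ).ncard = (Sw w).ncard := by
    rw [← compl_sw hx, Set.ncard_image_of_injective _ hinj]
  have h2 : (Sw w).ncard + ((Sw w)ᶜ).ncard = 2 ^ n := by
    rw [Set.ncard_add_ncard_compl, card_G]
  have hn : 1 ≤ n := by
    rcases Nat.eq_zero_or_pos n with h | h
    · subst h
      exact absurd (funext fun i => absurd i.2 (by simp)) hw
    · exact h
  have h3 : 2 ^ n = 2 ^ (n - 1) * 2 := by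
    rw [← pow_succ, Nat.sub_add_cancel hn]
  omega

lemma sumFree_ncard_le (hn : 1 ≤ n) (T : Set (G n)) (hT : AddSumFree T) :
    T.ncard ≤ 2 ^ (n - 1) := by
  rcases T.eq_empty_or_nonempty with rfl | ⟨t, ht⟩
  · simp
  have hsub : (fun v => t + v) '' T ⊆ Tᶜ := by
    rintro _ ⟨s, hs, rfl⟩
    exact hT t ht s hs
  have hinj : Function.Injective (fun v : G n => t + v) := fun a b h => by
    simpa using congrArg (fun y => t + y) h
  have h1 : T.ncard ≤ Tᶜ.ncard := by
    rw [← Set.ncard_image_of_injective T hinj]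
    exact Set.ncard_le_ncard hsub (Set.toFinite _)
  have h2 : T.ncard + Tᶜ.ncard = 2 ^ n := by
    rw [Set.ncard_add_ncard_compl, card_G]
  have h3 : 2 ^ n = 2 ^ (n - 1) * 2 := by
    rw [← pow_succ, Nat.sub_add_cancel hn]
  omega

end MySF

namespace MySF

lemma sw_inj : Function.Injective (Sw (n := n)) := by
  intro w w' h
  funext i
  have key : ∀ u u' : ZMod 2, (u = 1 ↔ u' = 1) → u = u' := by decide
  apply key
  have h1 : Pi.single i 1 ∈ Sw w ↔ Pi.single i 1 ∈ Sw w' := by rw [h]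
  simpa [Sw, L_single] using h1

lemma sw_isMax (hn : 1 ≤ n) {w : G n} (hw : w ≠ 0) : IsMaxAddSumFree (Sw w) := by
  refine ⟨exists_mem_sw hw, sw_sumFree w, fun T hT => ?_⟩
  rw [sw_ncard hw]
  exact sumFree_ncard_le hn T hT

lemma max_eq_sw (hn : 1 ≤ n) {S : Set (G n)} (hS : IsMaxAddSumFree S) :
    ∃ w : G n, w ≠ 0 ∧ S = Sw w := by
  classical
  obtain ⟨⟨s₀, hs₀⟩, hSF, hmax⟩ := hS
  -- the example w₀
  have hw0 : (Pi.single (⟨0, hn⟩ : Fin n) 1 : G n) ≠ 0 := by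
    intro h
    have := congrFun h ⟨0, hn⟩
    simp at this
  have hcard : S.ncard = 2 ^ (n - 1) := by
    have h1 := hmax _ (sw_sumFree (Pi.single (⟨0, hn⟩ : Fin n) 1))
    rw [sw_ncard hw0] at h1
    exact le_antisymm (sumFree_ncard_le hn S hSF) h1
  have hccard : Sᶜ.ncard = 2 ^ (n - 1) := by
    have h2 : S.ncard + Sᶜ.ncard = 2 ^ n := by
      rw [Set.ncard_add_ncard_compl, card_G]
    have h3 : 2 ^ n = 2 ^ (n - 1) * 2 := by
      rw [← pow_succ, Nat.sub_add_cancel hn]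
    omega
  -- for any a ∈ S, a + S = Sᶜ
  have key : ∀ a ∈ S, (fun v => a + v) '' S = Sᶜ := by
    intro a ha
    have hinj : Function.Injective (fun v : G n => a + v) := fun x y h => by
      simpa using congrArg (fun y => a + y) h
    apply Set.eq_of_subset_of_ncard_le
    · rintro _ ⟨s, hs, rfl⟩
      exact hSF a ha s hs
    · rw [Set.ncard_image_of_injective _ hinj, hcard, hccard]
    · exact Set.toFinite _
  -- the indicator function
  set Lf : G n → ZMod 2 := fun v => if v ∈ S then 1 else 0 with hLf
  have hzero : (0 : G n) ∉ S := by
    intro h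
    exact hSF 0 h 0 h (by simpa using h)
  have mem_iff : ∀ v, v ∈ S ↔ Lf v = 1 := by
    intro v
    by_cases h : v ∈ S <;> simp [hLf, h]
  have decomp : ∀ a ∉ S, ∃ s ∈ S, a = s₀ + s := by
    intro a haS
    have : a ∈ (fun v => s₀ + v) '' S := by rw [key s₀ hs₀]; exact haS
    obtain ⟨s, hs, h⟩ := this
    exact ⟨s, hs, h.symm⟩
  have Ladd : ∀ a b, Lf (a + b) = Lf a + Lf b := by
    intro a b
    by_cases ha : a ∈ S <;> by_cases hb : b ∈ S
    · have : a + b ∉ S := hSF a ha b hb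
      simp [hLf, ha, hb, this]
      decide
    · -- a ∈ S, b ∉ S : b = a + s so a + b = s ∈ S
      have : b ∈ (fun v => a + v) '' S := by rw [key a ha]; exact hb
      obtain ⟨s, hs, hsb⟩ := this
      have hab : a + b = s := by
        rw [← hsb]; show a + (a + s) = s; rw [← add_assoc, gadd_self, zero_add]
      simp [hLf, ha, hb, hab, hs]
    · have : a + b = b + a := add_comm a b
      rw [this]
      have hb' : a ∈ (fun v => b + v) '' S := by rw [key b hb]; exact ha
      obtain ⟨s, hs, hsb⟩ := hb'
      have hab : b + a = s := by
        rw [← hsb]; show b + (b + s) = s; rw [← add_assoc, gadd_self, zero_add]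
      simp [hLf, ha, hb, hab, hs]
    · obtain ⟨s₁, hs₁, rfl⟩ := decomp a ha
      obtain ⟨s₂, hs₂, rfl⟩ := decomp b hb
      have hab : s₀ + s₁ + (s₀ + s₂) = s₁ + s₂ := by
        rw [add_comm s₀ s₁, add_assoc, ← add_assoc s₀ s₀, gadd_self, zero_add]
      have : s₁ + s₂ ∉ S := hSF s₁ hs₁ s₂ hs₂
      simp [hLf, ha, hb, hab, this]
  -- Lf as AddMonoidHom
  let Lh : G n →+ ZMod 2 := AddMonoidHom.mk' Lf Ladd
  set w : G n := fun i => Lf (Pi.single i 1) with hw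
  have hLfw : ∀ v, Lf v = L w v := by
    intro v
    have hv : v = ∑ i, Pi.single i (v i) := (Finset.univ_sum_single v).symm
    calc Lf v = Lh v := rfl
      _ = Lh (∑ i, Pi.single i (v i)) := by rw [← hv]
      _ = ∑ i, Lh (Pi.single i (v i)) := map_sum Lh _ _
      _ = ∑ i, w i * v i := by
          apply Finset.sum_congr rfl
          intro i _
          rcases z2 (v i) with h | h
          · rw [h, mul_zero]
            show Lf (Pi.single i (0 : ZMod 2)) = 0
            rw [Pi.single_zero]
            simp [hLf, hzero]
          · rw [h, mul_one]
            rfl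
      _ = L w v := rfl
  refine ⟨w, ?_, ?_⟩
  · intro h
    have h1 : Lf s₀ = 1 := (mem_iff s₀).mp hs₀
    rw [hLfw, h] at h1
    have : L (0 : G n) s₀ = 0 := by simp [L]
    rw [this] at h1
    exact absurd h1 (by decide)
  · ext v
    simp only [Sw, Set.mem_setOf_eq]
    rw [← hLfw]
    exact mem_iff v

end MySF

/-- The number of maximal sum-free sets in `(ℤ/2ℤ)^n` is `2^n - 1`. -/
theorem card_maxSumFree_elementary_abelian_two (n : ℕ) (hn : 1 ≤ n) :
    {S : Set (Fin n → ZMod 2) | IsMaxAddSumFree S}.ncard = 2 ^ n - 1 := by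
  have hset : {S : Set (Fin n → ZMod 2) | IsMaxAddSumFree S}
      = MySF.Sw '' {w : MySF.G n | w ≠ 0} := by
    ext S
    simp only [Set.mem_setOf_eq, Set.mem_image]
    constructor
    · intro hS
      obtain ⟨w, hw, rfl⟩ := MySF.max_eq_sw hn hS
      exact ⟨w, hw, rfl⟩
    · rintro ⟨w, hw, rfl⟩
      exact MySF.sw_isMax hn hw
  rw [hset, Set.ncard_image_of_injective _ MySF.sw_inj]
  have h1 : {w : MySF.G n | w ≠ 0} = ({0} : Set (MySF.G n))ᶜ := by
    ext w; simp
  rw [h1]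
  have h2 : ({0} : Set (MySF.G n)).ncard + (({0} : Set (MySF.G n))ᶜ).ncard
      = 2 ^ n := by
    rw [Set.ncard_add_ncard_compl, MySF.card_G]
  rw [Set.ncard_singleton] at h2
  omega
end

section
/- If S is a maximal sum-free set in the elementary abelian 2-group G = (ℤ/2ℤ)^n (n ≥ 1), then G is the disjoint union of S and SS, where SS = {xy : x, y ∈ S}. -/
open Pointwise

/-- If `S` is a maximal sum-free set in `(ℤ/2ℤ)^n`, then the group is the disjoint
union of `S` and `S + S`. -/
theorem maxSumFree_union_sumset (n : ℕ) (hn : 1 ≤ n) (S : Set (Fin n → ZMod 2))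
    (hS : IsMaxAddSumFree S) :
    Disjoint S (S + S) ∧ S ∪ (S + S) = Set.univ := by
  obtain ⟨⟨s0, hs0⟩, hSF, hmax⟩ := hS
  have hadd : ∀ a : Fin n → ZMod 2, a + a = 0 := by
    intro a; funext i; exact CharTwo.add_self_eq_zero _
  have h0 : (0 : Fin n → ZMod 2) ∉ S := fun h => hSF 0 h 0 h (by simpa using h)
  constructor
  · rw [Set.disjoint_right]
    rintro x ⟨a, ha, b, hb, rfl⟩
    exact hSF a ha b hb
  · by_contra hne
    obtain ⟨x, hx⟩ : ∃ x, x ∉ S ∪ (S + S) := by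
      by_contra h
      push_neg at h
      exact hne (Set.eq_univ_of_forall h)
    have hxS : x ∉ S := fun h => hx (Or.inl h)
    have hxSS : x ∉ S + S := fun h => hx (Or.inr h)
    have hx0 : x ≠ 0 := by
      intro h
      apply hxSS
      rw [h, ← hadd s0]
      exact Set.add_mem_add hs0 hs0
    have hSF' : AddSumFree (insert x S) := by
      rintro a (rfl | ha) b (rfl | hb)
      · rw [hadd]
        rintro (h | h)
        · exact hx0 h.symm
        · exact h0 h
      · rintro (h | h)
        · apply h0
          have hb0 : a + b = a + 0 := by simpa using h
          rw [← add_left_cancel hb0]; exact hb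
        · apply hxSS
          have : a = (a + b) + b := by rw [add_assoc, hadd, add_zero]
          rw [this]
          exact Set.add_mem_add h hb
      · rintro (h | h)
        · apply h0
          have ha0 : a + b = 0 + b := by simpa [add_comm] using h
          rw [← add_right_cancel ha0]; exact ha
        · apply hxSS
          have : b = a + (a + b) := by rw [← add_assoc, hadd, zero_add]
          rw [this]
          exact Set.add_mem_add ha h
      · rintro (h | h)
        · exact hxSS (h ▸ Set.add_mem_add ha hb)
        · exact hSF a ha b hb h
    have hle := hmax _ hSF'
    have hcard : (insert x S).ncard = S.ncard + 1 :=
      Set.ncard_insert_of_notMem hxS (Set.toFinite S)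
    omega
end

section
/- If S is a maximal sum-free set in the elementary abelian 3-group G = (ℤ/3ℤ)^n (n ≥ 1) and x ∈ S, then G = S ∪ x⁻¹S ∪ xS and |S| = |G|/3 = 3^{n−1}. -/
open Pointwise

/-! For `x ∈ S` with `3 • x = 0`, the translates `S`, `-x +ᵥ S`, `x +ᵥ S` of a sum-free set are
pairwise disjoint, so `3 |S| ≤ |G|`, with equality exactly when they cover `G`. In `(ℤ/3ℤ)^n`
the set `{f | f i = 1}` is sum-free, and it covers `G` together with its translates by `±e`
(`e` the `i`-th unit vector), so it has `3^(n-1)` elements and the bound is attained. -/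

section AddSumFree

variable {G : Type*} [AddGroup G] {S : Set G} {x : G}

theorem AddSumFree.preimage {H : Type*} [AddGroup H] (φ : G →+ H) {T : Set H}
    (hT : AddSumFree T) : AddSumFree (φ ⁻¹' T) := by
  intro a ha b hb hab
  exact hT _ ha _ hb (by simpa only [Set.mem_preimage, map_add] using hab)

theorem AddSumFree.disjoint_vadd (hS : AddSumFree S) (hx : x ∈ S) : Disjoint S (x +ᵥ S) := by
  rw [Set.disjoint_left]
  rintro _ hxb ⟨b, hb, rfl⟩
  exact hS x hx b hb hxb

theorem AddSumFree.disjoint_neg_vadd (hS : AddSumFree S) (hx : x ∈ S) :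
    Disjoint S (-x +ᵥ S) := by
  rw [Set.disjoint_left]
  rintro _ hb' ⟨b, hb, rfl⟩
  exact hS x hx _ hb' (by simpa only [vadd_eq_add, add_neg_cancel_left] using hb)

theorem AddSumFree.disjoint_neg_vadd_vadd (hS : AddSumFree S) (hx : x ∈ S) (hx3 : 3 • x = 0) :
    Disjoint (-x +ᵥ S) (x +ᵥ S) := by
  rw [Set.disjoint_left]
  rintro _ ⟨b, hb, rfl⟩ ⟨c, hc, hcb⟩
  have hxb : x + b = c := by
    simp only [vadd_eq_add, eq_neg_add_iff_add_eq] at hcb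
    rw [← hcb, ← add_assoc, ← add_assoc, ← two_nsmul, ← succ_nsmul, hx3, zero_add]
  exact hS x hx b hb (hxb ▸ hc)

theorem AddSumFree.ncard_union_translates (hS : AddSumFree S) (hfin : S.Finite) (hx : x ∈ S)
    (hx3 : 3 • x = 0) : (S ∪ (-x +ᵥ S) ∪ (x +ᵥ S)).ncard = 3 * S.ncard := by
  have hdisj : Disjoint (S ∪ (-x +ᵥ S)) (x +ᵥ S) :=
    Set.disjoint_union_left.2 ⟨hS.disjoint_vadd hx, hS.disjoint_neg_vadd_vadd hx hx3⟩
  rw [Set.ncard_union_eq hdisj (hfin.union (hfin.vadd_set)) hfin.vadd_set,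
    Set.ncard_union_eq (hS.disjoint_neg_vadd hx) hfin hfin.vadd_set,
    Set.ncard_vadd_set, Set.ncard_vadd_set]
  ring

variable [Finite G]

theorem AddSumFree.three_mul_ncard_le (hS : AddSumFree S) (hx : x ∈ S) (hx3 : 3 • x = 0) :
    3 * S.ncard ≤ Nat.card G := by
  rw [← hS.ncard_union_translates S.toFinite hx hx3, ← Set.ncard_univ]
  exact Set.ncard_le_ncard (Set.subset_univ _)

theorem AddSumFree.union_translates_eq_univ (hS : AddSumFree S) (hx : x ∈ S) (hx3 : 3 • x = 0)
    (hcard : Nat.card G ≤ 3 * S.ncard) : S ∪ (-x +ᵥ S) ∪ (x +ᵥ S) = Set.univ := by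
  refine Set.eq_of_subset_of_ncard_le (Set.subset_univ _) ?_
  rwa [Set.ncard_univ, hS.ncard_union_translates S.toFinite hx hx3]

end AddSumFree

theorem ZMod.addSumFree_singleton_one : AddSumFree ({1} : Set (ZMod 3)) := by
  simp only [AddSumFree, Set.mem_singleton_iff, forall_eq]
  decide

theorem ZMod.three_nsmul_eq_zero : ∀ a : ZMod 3, 3 • a = 0 := by
  decide

theorem three_mul_ncard_preimage_one {G : Type*} [AddGroup G] [Finite G] (φ : G →+ ZMod 3)
    {e : G} (he : φ e = 1) (he3 : 3 • e = 0) : 3 * (φ ⁻¹' {1}).ncard = Nat.card G := by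
  have hA := ZMod.addSumFree_singleton_one.preimage φ
  have he_mem : e ∈ φ ⁻¹' {1} := he
  have hcover : φ ⁻¹' {1} ∪ (-e +ᵥ φ ⁻¹' {1}) ∪ (e +ᵥ φ ⁻¹' {1}) = Set.univ := by
    ext g
    simp only [Set.mem_union, Set.mem_vadd_set_iff_neg_vadd_mem, Set.mem_preimage,
      Set.mem_singleton_iff, vadd_eq_add, neg_neg, map_add, map_neg, he, Set.mem_univ, iff_true]
    generalize φ g = a
    revert a
    decide
  rw [← hA.ncard_union_translates (Set.toFinite _) he_mem he3, hcover, Set.ncard_univ]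

/-- If `S` is a maximal sum-free set in `(ℤ/3ℤ)^n` and `x ∈ S`, then
`G = S ∪ (-x + S) ∪ (x + S)` and `|S| = |G|/3 = 3^(n-1)`. -/
theorem maxSumFree_translates_cover (n : ℕ) (hn : 1 ≤ n) (S : Set (Fin n → ZMod 3))
    (hS : IsMaxAddSumFree S) (x : Fin n → ZMod 3) (hx : x ∈ S) :
    S ∪ ((-x) +ᵥ S) ∪ (x +ᵥ S) = Set.univ ∧
      S.ncard = Nat.card (Fin n → ZMod 3) / 3 ∧ S.ncard = 3 ^ (n - 1) := by
  obtain ⟨-, hsf, hmax⟩ := hS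
  have h3 (g : Fin n → ZMod 3) : 3 • g = 0 := funext fun i => ZMod.three_nsmul_eq_zero (g i)
  have hcardG : Nat.card (Fin n → ZMod 3) = 3 * 3 ^ (n - 1) := by
    rw [Nat.card_fun, Nat.card_zmod, Nat.card_eq_fintype_card, Fintype.card_fin, ← pow_succ',
      Nat.sub_add_cancel hn]
  let i : Fin n := ⟨0, hn⟩
  have hA := three_mul_ncard_preimage_one (Pi.evalAddMonoidHom (fun _ => ZMod 3) i)
    (e := Pi.single i 1) (by simp) (h3 _)
  have hlower : Nat.card (Fin n → ZMod 3) ≤ 3 * S.ncard := by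
    rw [← hA]
    exact Nat.mul_le_mul_left 3 (hmax _ (ZMod.addSumFree_singleton_one.preimage _))
  have hupper := hsf.three_mul_ncard_le hx (h3 x)
  have hScard : S.ncard = 3 ^ (n - 1) := by omega
  exact ⟨hsf.union_translates_eq_univ hx (h3 x) hlower, by omega, hScard⟩
end

section
/- If S is a maximal sum-free set in the elementary abelian 3-group G = (ℤ/3ℤ)^n (n ≥ 1) and x ∈ S, then x⁻¹S = S⁻¹S, where S⁻¹S = {y⁻¹z : y, z ∈ S}. -/
open Pointwise

/-- If `S` is a maximal sum-free set in `(ℤ/3ℤ)^n` and `x ∈ S`, then `-x + S = -S + S`. -/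
theorem maxSumFree_neg_translate_eq (n : ℕ) (hn : 1 ≤ n) (S : Set (Fin n → ZMod 3))
    (hS : IsMaxAddSumFree S) (x : Fin n → ZMod 3) (hx : x ∈ S) :
    (-x) +ᵥ S = (-S) + S := by
  obtain ⟨hne, hsf, hmax⟩ := hS
  have exp3 : ∀ v : Fin n → ZMod 3, v + v + v = 0 := by
    intro v; funext i
    show v i + v i + v i = 0
    have h3 : (3 : ZMod 3) = 0 := rfl
    calc v i + v i + v i = 3 * v i := by ring
    _ = 0 := by rw [h3, zero_mul]
  have neg_eq : ∀ v : Fin n → ZMod 3, -v = v + v := by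
    intro v
    rw [neg_eq_iff_add_eq_zero, ← add_assoc]
    exact exp3 v
  set i0 : Fin n := ⟨0, hn⟩ with hi0
  set T : Set (Fin n → ZMod 3) := {v | v i0 = 1} with hT
  have hTsf : AddSumFree T := by
    intro a ha b hb hab
    have h : a i0 + b i0 = 1 := hab
    rw [ha, hb] at h
    exact absurd h (by decide)
  set e : Fin n → ZMod 3 := fun i => if i = i0 then 1 else 0 with he
  have hei0 : e i0 = 1 := by simp [he]
  have hcases : ∀ c : ZMod 3, c = 0 ∨ c = 1 ∨ c = 2 := by decide
  have hcoverT : (Set.univ : Set (Fin n → ZMod 3)) ⊆ T ∪ (e +ᵥ T) ∪ ((-e) +ᵥ T) := by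
    intro v _
    rcases hcases (v i0) with h | h | h
    · right
      rw [Set.mem_vadd_set_iff_neg_vadd_mem]
      show (-(-e) + v) i0 = 1
      simp only [Pi.add_apply, Pi.neg_apply, hei0, h, neg_neg]
      decide
    · left; left; exact h
    · left; right
      rw [Set.mem_vadd_set_iff_neg_vadd_mem]
      show (-e + v) i0 = 1
      simp only [Pi.add_apply, Pi.neg_apply, hei0, h]
      decide
  have hcardT : (Set.univ : Set (Fin n → ZMod 3)).ncard ≤ 3 * S.ncard := by
    have h1 := Set.ncard_le_ncard hcoverT (Set.toFinite _)
    have h2 := Set.ncard_union_le (T ∪ (e +ᵥ T)) ((-e) +ᵥ T)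
    have h3 := Set.ncard_union_le T (e +ᵥ T)
    have h4 : (e +ᵥ T).ncard = T.ncard := Set.ncard_vadd_set _ _
    have h5 : ((-e) +ᵥ T).ncard = T.ncard := Set.ncard_vadd_set _ _
    have h6 := hmax T hTsf
    omega
  have hd1 : Disjoint S (x +ᵥ S) := by
    rw [Set.disjoint_left]
    rintro a ha ⟨b, hb, rfl⟩
    exact hsf x hx b hb ha
  have hd2 : Disjoint S ((-x) +ᵥ S) := by
    rw [Set.disjoint_left]
    rintro a ha ⟨b, hb, hab⟩
    simp only [vadd_eq_add] at hab
    have h : x + a = b := by rw [← hab, add_neg_cancel_left]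
    exact hsf x hx a ha (by rw [h]; exact hb)
  have hd3 : Disjoint (x +ᵥ S) ((-x) +ᵥ S) := by
    rw [Set.disjoint_left]
    rintro a ⟨b, hb, rfl⟩ ⟨c, hc, hbc⟩
    simp only [vadd_eq_add] at hbc
    have h1 : c = x + (x + b) := by
      have h := congrArg (fun u => x + u) hbc
      simp only [add_neg_cancel_left] at h
      exact h
    have hc' : x + c = b := by
      rw [h1, ← add_assoc, ← add_assoc, exp3 x, zero_add]
    exact hsf x hx c hc (by rw [hc']; exact hb)
  have hScover : ∀ g : Fin n → ZMod 3, g ∈ S ∨ g ∈ x +ᵥ S ∨ g ∈ (-x) +ᵥ S := by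
    have hU : S ∪ (x +ᵥ S) ∪ ((-x) +ᵥ S) = Set.univ := by
      apply Set.eq_of_subset_of_ncard_le (Set.subset_univ _) _ (Set.toFinite _)
      rw [Set.ncard_union_eq (by
          rw [Set.disjoint_union_left]; exact ⟨hd2, hd3⟩) (Set.toFinite _) (Set.toFinite _),
        Set.ncard_union_eq hd1 (Set.toFinite _) (Set.toFinite _),
        Set.ncard_vadd_set, Set.ncard_vadd_set]
      omega
    intro g
    have : g ∈ S ∪ (x +ᵥ S) ∪ ((-x) +ᵥ S) := hU ▸ Set.mem_univ g
    simp only [Set.mem_union] at this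
    tauto
  have hnegS : ∀ v ∈ S, -v ∉ S := by
    intro v hv hnv
    apply hsf (-v) hnv (-v) hnv
    have h : -v + -v = v := by
      rw [neg_eq v]
      have h2 : v + v + (v + v) = v + (v + v + v) := by abel
      rw [h2, exp3 v, add_zero]
    rw [h]; exact hv
  ext g
  constructor
  · rintro ⟨s, hs, rfl⟩
    exact Set.add_mem_add (Set.neg_mem_neg.mpr hx) hs
  · rintro ⟨a, ha, z, hz, rfl⟩
    have hy : -a ∈ S := Set.mem_neg.mp ha
    obtain ⟨y, rfl⟩ : ∃ y, a = -y := ⟨-a, (neg_neg a).symm⟩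
    rw [neg_neg] at hy
    rw [Set.mem_vadd_set_iff_neg_vadd_mem, neg_neg, vadd_eq_add]
    set w : Fin n → ZMod 3 := z - y with hw
    have hwS : w ∉ S := by
      intro hwS
      apply hsf y hy w hwS
      have hyz : y + w = z := by rw [hw]; abel
      rw [hyz]; exact hz
    rcases hScover w with h | h | h
    · exact absurd h hwS
    · obtain ⟨t, ht, hwt⟩ := h
      simp only [vadd_eq_add] at hwt
      exfalso
      have ht2 : t = -x + (z - y) := by rw [← hw, ← hwt, neg_add_cancel_left]
      have ht' : z + (-x - y) = t := by rw [ht2]; abel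
      have fact1 : (-x - y) ∉ S := fun hmem => hsf z hz _ hmem (by rw [ht']; exact ht)
      rcases hScover (-x - y) with h' | h' | h'
      · exact fact1 h'
      · obtain ⟨s, hs, hs'⟩ := h'
        simp only [vadd_eq_add] at hs'
        have hs2 : s = -x + (-x - y) := by rw [← hs', neg_add_cancel_left]
        have hsxy : s = x - y := by
          rw [hs2, neg_eq x]
          have h2 : x + x + (x + x - y) = (x + x + x) + (x - y) := by abel
          rw [h2, exp3 x, zero_add]
        apply hsf y hy s hs
        rw [hsxy]
        have h3 : y + (x - y) = x := by abel
        rw [h3]; exact hx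
      · obtain ⟨s, hs, hs'⟩ := h'
        simp only [vadd_eq_add] at hs'
        rw [sub_eq_add_neg] at hs'
        have : s = -y := add_left_cancel hs'
        exact hnegS y hy (this ▸ hs)
    · obtain ⟨s, hs, hws⟩ := h
      simp only [vadd_eq_add] at hws
      have hs2 : s = x + (z - y) := by rw [← hw, ← hws, add_neg_cancel_left]
      have : x + (-y + z) = s := by rw [hs2]; abel
      rw [this]; exact hs
end

section
/- If S is a maximal sum-free set in the elementary abelian 3-group G = (ℤ/3ℤ)^n (n ≥ 1) and x ∈ S, then xS = S⁻¹ = SS, where xS = {xs : s ∈ S}, S⁻¹ = {s⁻¹ : s ∈ S} and SS = {yz : y, z ∈ S}. -/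
open Pointwise

private lemma zmod3_pt {n : ℕ} (P : ZMod 3 → ZMod 3 → Prop) (h : ∀ a b : ZMod 3, P a b)
    (u v : Fin n → ZMod 3) (i : Fin n) : P (u i) (v i) := h _ _

/-- If `S` is a maximal sum-free set in `(ℤ/3ℤ)^n` and `x ∈ S`, then `x + S = -S = S + S`. -/
theorem maxSumFree_translate_eq_neg (n : ℕ) (hn : 1 ≤ n) (S : Set (Fin n → ZMod 3))
    (hS : IsMaxAddSumFree S) (x : Fin n → ZMod 3) (hx : x ∈ S) :
    x +ᵥ S = -S ∧ -S = S + S := by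
  classical
  obtain ⟨hne, hsf, hmax⟩ := hS
  -- the witness sum-free set of size |G|/3
  set i0 : Fin n := ⟨0, hn⟩ with hi0
  set T0 : Set (Fin n → ZMod 3) := {v | v i0 = 0} with hT0
  set T1 : Set (Fin n → ZMod 3) := {v | v i0 = 1} with hT1
  set T2 : Set (Fin n → ZMod 3) := {v | v i0 = 2} with hT2
  set e : Fin n → ZMod 3 := fun i => if i = i0 then 1 else 0 with he
  have hei0 : e i0 = 1 := by simp [he]
  have hT1sf : AddSumFree T1 := by
    intro a ha b hb hab
    have h1 : a i0 = 1 := ha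
    have h2 : b i0 = 1 := hb
    have h3 : (a + b) i0 = 1 := hab
    rw [Pi.add_apply, h1, h2] at h3
    exact absurd h3 (by decide)
  have hT01 : e +ᵥ T0 = T1 := by
    ext v
    rw [Set.mem_vadd_set_iff_neg_vadd_mem]
    show (-e + v) i0 = 0 ↔ v i0 = 1
    rw [Pi.add_apply, Pi.neg_apply, hei0]
    constructor
    · intro h; have : ∀ a : ZMod 3, -1 + a = 0 → a = 1 := by decide
      exact this _ h
    · intro h; rw [h]; decide
  have hT12 : e +ᵥ T1 = T2 := by
    ext v
    rw [Set.mem_vadd_set_iff_neg_vadd_mem]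
    show (-e + v) i0 = 1 ↔ v i0 = 2
    rw [Pi.add_apply, Pi.neg_apply, hei0]
    constructor
    · intro h; have : ∀ a : ZMod 3, -1 + a = 1 → a = 2 := by decide
      exact this _ h
    · intro h; rw [h]; decide
  have hcoverT : T0 ∪ T1 ∪ T2 = Set.univ := by
    ext v
    simp only [Set.mem_union, Set.mem_univ, iff_true]
    have : ∀ a : ZMod 3, a = 0 ∨ a = 1 ∨ a = 2 := by decide
    rcases this (v i0) with h | h | h
    · exact Or.inl (Or.inl h)
    · exact Or.inl (Or.inr h)
    · exact Or.inr h
  have hd01 : Disjoint T0 T1 := by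
    rw [Set.disjoint_left]
    intro v h1 h2
    have e1 : v i0 = 0 := h1
    have e2 : v i0 = 1 := h2
    rw [e1] at e2; exact absurd e2 (by decide)
  have hd012 : Disjoint (T0 ∪ T1) T2 := by
    rw [Set.disjoint_left]
    rintro v (h1 | h1) h2 <;>
    · have e1 : v i0 = _ := h1
      have e2 : v i0 = 2 := h2
      rw [e1] at e2; exact absurd e2 (by decide)
  have hcardT : Set.ncard (Set.univ : Set (Fin n → ZMod 3)) = 3 * T1.ncard := by
    have c0 : T0.ncard = T1.ncard := by
      rw [← hT01, Set.ncard_vadd_set]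
    have c2 : T2.ncard = T1.ncard := by
      rw [← hT12, Set.ncard_vadd_set]
    rw [← hcoverT, Set.ncard_union_eq hd012, Set.ncard_union_eq hd01, c0, c2]
    ring
  have hTS : T1.ncard ≤ S.ncard := hmax T1 hT1sf
  -- covering lemma : for y ∈ S, S ∪ (y + S) ∪ (2y + S) = G
  have cover : ∀ y ∈ S, S ∪ (y +ᵥ S) ∪ ((y + y) +ᵥ S) = Set.univ := by
    intro y hy
    have dAB : Disjoint S (y +ᵥ S) := by
      rw [Set.disjoint_left]
      intro v hv hv'
      rw [Set.mem_vadd_set_iff_neg_vadd_mem, vadd_eq_add] at hv'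
      have : y + (-y + v) ∈ S → False := hsf y hy _ hv'
      apply this
      have : y + (-y + v) = v := by abel
      rwa [this]
    have dAC : Disjoint S ((y + y) +ᵥ S) := by
      rw [Set.disjoint_left]
      intro v hv hv'
      rw [Set.mem_vadd_set_iff_neg_vadd_mem, vadd_eq_add] at hv'
      have key : -(y + y) + v = y + v := by
        funext i
        exact zmod3_pt (fun a b => -(a + a) + b = a + b) (by decide) y v i
      rw [key] at hv'
      exact hsf y hy v hv hv'
    have dBC : Disjoint (y +ᵥ S) ((y + y) +ᵥ S) := by
      rw [Set.disjoint_left]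
      intro v hv hv'
      rw [Set.mem_vadd_set_iff_neg_vadd_mem, vadd_eq_add] at hv
      rw [Set.mem_vadd_set_iff_neg_vadd_mem, vadd_eq_add] at hv'
      have : y + (-(y + y) + v) ∈ S → False := hsf y hy _ hv'
      apply this
      have key : y + (-(y + y) + v) = -y + v := by
        funext i
        exact zmod3_pt (fun a b => a + (-(a + a) + b) = -a + b) (by decide) y v i
      rwa [key]
    have dABC : Disjoint (S ∪ (y +ᵥ S)) ((y + y) +ᵥ S) :=
      Set.disjoint_union_left.2 ⟨dAC, dBC⟩
    have hsub : S ∪ (y +ᵥ S) ∪ ((y + y) +ᵥ S) ⊆ Set.univ := Set.subset_univ _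
    have hcard : Set.ncard (Set.univ : Set (Fin n → ZMod 3))
        ≤ (S ∪ (y +ᵥ S) ∪ ((y + y) +ᵥ S)).ncard := by
      rw [Set.ncard_union_eq dABC, Set.ncard_union_eq dAB,
        Set.ncard_vadd_set, Set.ncard_vadd_set, hcardT]
      omega
    exact Set.eq_of_subset_of_ncard_le hsub hcard
  -- key fact : for y, z ∈ S, -(y+z) ∈ S
  have key : ∀ y ∈ S, ∀ z ∈ S, -(y + z) ∈ S := by
    intro y hy z hz
    have : -(y + z) ∈ S ∪ (y +ᵥ S) ∪ ((y + y) +ᵥ S) := by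
      rw [cover y hy]; trivial
    rcases this with (h | h) | h
    · exact h
    · exfalso
      rw [Set.mem_vadd_set_iff_neg_vadd_mem, vadd_eq_add] at h
      have heq : (-y + -(y + z)) + z = y := by
        funext i
        exact zmod3_pt (fun a b => (-a + -(a + b)) + b = a) (by decide) y z i
      refine hsf _ h z hz ?_
      rw [heq]; exact hy
    · exfalso
      rw [Set.mem_vadd_set_iff_neg_vadd_mem, vadd_eq_add] at h
      have heq : (-(y + y) + -(y + z)) + (-(y + y) + -(y + z)) = z := by
        funext i
        exact zmod3_pt
          (fun a b => (-(a + a) + -(a + b)) + (-(a + a) + -(a + b)) = b) (by decide) y z i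
      refine hsf _ h _ h ?_
      rw [heq]; exact hz
  constructor
  · ext v
    rw [Set.mem_vadd_set_iff_neg_vadd_mem, vadd_eq_add, Set.mem_neg]
    constructor
    · intro h
      have := key x hx _ h
      have heq : -(x + (-x + v)) = -v := by abel_nf
      rwa [heq] at this
    · intro h
      have := key x hx _ h
      have heq : -(x + -v) = -x + v := by abel_nf
      rwa [heq] at this
  · ext v
    rw [Set.mem_neg, Set.mem_add]
    constructor
    · intro h
      refine ⟨-v, h, -v, h, ?_⟩
      funext i
      exact zmod3_pt (fun a b => -a + -a = a) (by decide) v v i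
    · rintro ⟨y, hy, z, hz, rfl⟩
      exact key y hy z hz
end

section
/- For n ≥ 1, every non-trivial coset of a maximal subgroup of the elementary abelian 3-group G = (ℤ/3ℤ)^n is a maximal sum-free set in G of cardinality 3^{n−1}. -/
open Pointwise

/-- Every non-trivial coset of a maximal subgroup of `(ℤ/3ℤ)^n` is a maximal sum-free
set of cardinality `3^(n-1)`. -/
theorem coset_maximal_subgroup_isMaxSumFree_three (n : ℕ) (hn : 1 ≤ n)
    (M : AddSubgroup (Fin n → ZMod 3)) (hM : IsCoatom M) (x : Fin n → ZMod 3)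
    (hx : x ∉ M) :
    IsMaxAddSumFree (x +ᵥ (M : Set (Fin n → ZMod 3))) ∧
      (x +ᵥ (M : Set (Fin n → ZMod 3))).ncard = 3 ^ (n - 1) := by
  have hG : True := trivial
  -- exponent 3
  have h3 : ∀ g : Fin n → ZMod 3, g + g + g = 0 := by
    intro g; funext i
    show g i + g i + g i = 0
    have : ∀ a : ZMod 3, a + a + a = 0 := by decide
    exact this (g i)
  -- cardinality of G
  have hcardG : Nat.card (Fin n → ZMod 3) = 3 ^ n := by
    rw [Nat.card_pi]
    simp [Nat.card_eq_fintype_card]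
  -- cardinality of M
  have hcardM : Nat.card M = 3 ^ (n - 1) := by
    haveI : Fact (Nat.Prime 3) := ⟨by norm_num⟩
    set Q := (Fin n → ZMod 3) ⧸ M
    set y : Q := QuotientAddGroup.mk' M x with hy
    have hy0 : y ≠ 0 := by
      intro h
      exact hx ((QuotientAddGroup.eq_zero_iff x).mp h)
    have hytop : AddSubgroup.zmultiples y = ⊤ := by
      have hN : M < AddSubgroup.comap (QuotientAddGroup.mk' M) (AddSubgroup.zmultiples y) := by
        refine lt_of_le_of_ne ?_ ?_
        · intro m hm
          simp only [AddSubgroup.mem_comap]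
          have : (QuotientAddGroup.mk' M) m = 0 := (QuotientAddGroup.eq_zero_iff m).mpr hm
          rw [this]; exact zero_mem _
        · intro h
          apply hx
          rw [h]
          simp only [AddSubgroup.mem_comap]
          exact AddSubgroup.mem_zmultiples y
      have := hM.2 _ hN
      have hsurj : Function.Surjective (QuotientAddGroup.mk' M) :=
        QuotientAddGroup.mk'_surjective M
      calc AddSubgroup.zmultiples y
          = AddSubgroup.map (QuotientAddGroup.mk' M)
              (AddSubgroup.comap (QuotientAddGroup.mk' M) (AddSubgroup.zmultiples y)) :=
            (AddSubgroup.map_comap_eq_self_of_surjective hsurj _).symm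
        _ = ⊤ := by rw [this]; exact AddSubgroup.map_top_of_surjective _ hsurj
    have horder : addOrderOf y = 3 := by
      refine addOrderOf_eq_prime ?_ hy0
      have : (3 : ℕ) • x = 0 := by
        have := h3 x
        rw [show (3:ℕ) • x = x + x + x by module]
        exact this
      rw [hy, ← map_nsmul, this, map_zero]
    have hQ : Nat.card Q = 3 := by
      rw [← horder, ← Nat.card_zmultiples y, hytop]
      exact Nat.card_congr AddSubgroup.topEquiv.toEquiv.symm
    have hidx : M.index = 3 := by rw [AddSubgroup.index]; exact hQ
    have := AddSubgroup.card_mul_index M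
    rw [hidx, hcardG] at this
    have h3n : 3 ^ n = 3 ^ (n - 1) * 3 := by
      rw [← pow_succ, Nat.sub_add_cancel hn]
    omega
  -- ncard of the coset
  have hS : (x +ᵥ (M : Set (Fin n → ZMod 3))).ncard = 3 ^ (n - 1) := by
    rw [Set.ncard_vadd_set, ← Nat.card_coe_set_eq]
    simpa using hcardM
  -- sum-freeness of the coset
  have hSF : AddSumFree (x +ᵥ (M : Set (Fin n → ZMod 3))) := by
    rintro a ⟨p, hp, hap⟩ b ⟨q, hq, hbq⟩ ⟨r, hr, habr⟩
    simp only [vadd_eq_add] at hap hbq habr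
    apply hx
    rw [← hap, ← hbq] at habr
    -- x + r = (x+p) + (x+q)
    have hr2 : r = x + p + q := by
      have : x + r = x + (x + p + q) := by rw [habr]; abel
      exact add_left_cancel this
    have : x = r - p - q := by rw [hr2]; abel
    rw [this]
    exact sub_mem (sub_mem hr hp) hq
  -- upper bound for any sum-free set
  have hUB : ∀ T : Set (Fin n → ZMod 3), AddSumFree T → T.ncard ≤ 3 ^ (n - 1) := by
    intro T hT
    rcases T.eq_empty_or_nonempty with rfl | ⟨a, ha⟩
    · simp
    have hd1 : Disjoint T (a +ᵥ T) := by
      rw [Set.disjoint_left]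
      rintro g hg ⟨t, ht, he⟩
      simp only [vadd_eq_add] at he
      exact hT a ha t ht (he ▸ hg)
    have hd2 : Disjoint T ((a + a) +ᵥ T) := by
      rw [Set.disjoint_left]
      rintro g hg ⟨t, ht, he⟩
      simp only [vadd_eq_add] at he
      have hgt : g + a = t := by
        rw [← he]
        have key : a + a + t + a = t + (a + a + a) := by abel
        rw [key, h3 a, add_zero]
      exact hT g hg a ha (hgt ▸ ht)
    have hd3 : Disjoint (a +ᵥ T) ((a + a) +ᵥ T) := by
      rw [Set.disjoint_left]
      rintro g ⟨t, ht, he1⟩ ⟨t', ht', he2⟩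
      simp only [vadd_eq_add] at he1 he2
      have h2 : a + t = a + (a + t') := by rw [he1, ← he2]; abel
      have : a + t' = t := (add_left_cancel h2).symm
      exact hT a ha t' ht' (this ▸ ht)
    have hfin : ∀ s : Set (Fin n → ZMod 3), s.Finite := fun s => s.toFinite
    have hcard : (T ∪ (a +ᵥ T) ∪ ((a + a) +ᵥ T)).ncard = 3 * T.ncard := by
      rw [Set.ncard_union_eq (by
          rw [Set.disjoint_union_left]; exact ⟨hd2, hd3⟩) (hfin _) (hfin _),
        Set.ncard_union_eq hd1 (hfin _) (hfin _), Set.ncard_vadd_set, Set.ncard_vadd_set]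
      ring
    have hle : (T ∪ (a +ᵥ T) ∪ ((a + a) +ᵥ T)).ncard ≤ 3 ^ n := by
      have := Set.ncard_le_ncard (Set.subset_univ (T ∪ (a +ᵥ T) ∪ ((a + a) +ᵥ T))) (hfin _)
      rwa [Set.ncard_univ, hcardG] at this
    rw [hcard] at hle
    have h3n : 3 * 3 ^ (n - 1) = 3 ^ n := by
      calc 3 * 3 ^ (n - 1) = 3 ^ (n - 1 + 1) := (pow_succ' 3 (n - 1)).symm
        _ = 3 ^ n := by rw [Nat.sub_add_cancel hn]
    omega
  refine ⟨⟨⟨x, ⟨0, M.zero_mem, by simp⟩⟩, hSF, fun T hT => by rw [hS]; exact hUB T hT⟩, hS⟩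
end

section
/- For n ≥ 1, the non-trivial coset of every maximal subgroup of the elementary abelian 2-group G = (ℤ/2ℤ)^n is a maximal sum-free set in G of cardinality 2^{n−1}. -/
open Pointwise

private lemma aux_add_self {n : ℕ} (a : Fin n → ZMod 2) : a + a = 0 := by
  funext i
  show a i + a i = 0
  generalize a i = t; revert t; decide

private lemma aux_zsmul {n : ℕ} (k : ℤ) (a : Fin n → ZMod 2) : k • a = 0 ∨ k • a = a := by
  rcases Int.even_or_odd k with ⟨m, hm⟩ | ⟨m, hm⟩
  · left; subst hm; rw [add_zsmul, aux_add_self]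
  · right; subst hm
    rw [add_zsmul, one_zsmul, two_mul, add_zsmul, aux_add_self, zero_add]

private lemma aux_card {n : ℕ} : (Set.univ : Set (Fin n → ZMod 2)).ncard = 2 ^ n := by
  rw [Set.ncard_univ, Nat.card_eq_fintype_card, Fintype.card_fun, ZMod.card, Fintype.card_fin]

private lemma aux_ncard_vadd {n : ℕ} (x : Fin n → ZMod 2) (s : Set (Fin n → ZMod 2)) :
    (x +ᵥ s).ncard = s.ncard := by
  rw [← Set.image_vadd]
  exact Set.ncard_image_of_injective s (add_right_injective x)

/-- The non-trivial coset of every maximal subgroup of `(ℤ/2ℤ)^n` is a maximal sum-free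
set of cardinality `2^(n-1)`. -/
theorem coset_maximal_subgroup_isMaxSumFree_two (n : ℕ) (hn : 1 ≤ n)
    (M : AddSubgroup (Fin n → ZMod 2)) (hM : IsCoatom M) (x : Fin n → ZMod 2)
    (hx : x ∉ M) :
    IsMaxAddSumFree (x +ᵥ (M : Set (Fin n → ZMod 2))) ∧
      (x +ᵥ (M : Set (Fin n → ZMod 2))).ncard = 2 ^ (n - 1) := by
  set S : Set (Fin n → ZMod 2) := x +ᵥ (M : Set (Fin n → ZMod 2)) with hSdef
  have hpow : 2 ^ n = 2 * 2 ^ (n - 1) := by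
    rw [← pow_succ']
    congr 1
    omega
  -- sum-freeness
  have hSF : AddSumFree S := by
    rintro a ⟨m1, hm1, rfl⟩ b ⟨m2, hm2, rfl⟩ hab
    obtain ⟨m3, hm3, h3⟩ := hab
    simp only [vadd_eq_add] at h3
    have h4 : x + m3 = m1 + m2 := by
      rw [h3]
      calc x + m1 + (x + m2) = (x + x) + (m1 + m2) := by abel
        _ = m1 + m2 := by rw [aux_add_self, zero_add]
    exact hx (by rw [eq_sub_of_add_eq h4]; exact M.sub_mem (M.add_mem hm1 hm2) hm3)
  -- the cover G = M ∪ S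
  have htop : M ⊔ AddSubgroup.closure {x} = ⊤ := by
    refine hM.2 _ (lt_of_le_of_ne le_sup_left fun h => hx ?_)
    exact h ▸ (le_sup_right (α := AddSubgroup (Fin n → ZMod 2))
      (AddSubgroup.subset_closure (Set.mem_singleton x)))
  have hcover : ∀ g : Fin n → ZMod 2, g ∈ (M : Set (Fin n → ZMod 2)) ∪ S := by
    intro g
    by_cases hg : g ∈ M
    · exact Or.inl hg
    · right
      have hg' : g ∈ M ⊔ AddSubgroup.closure {x} := htop ▸ AddSubgroup.mem_top g
      obtain ⟨y, hy, z, hz, hyz⟩ := AddSubgroup.mem_sup.mp hg'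
      obtain ⟨k, hk⟩ := AddSubgroup.mem_closure_singleton.mp hz
      rcases aux_zsmul k x with h0 | h1
      · exact absurd (by rw [← hyz, ← hk, h0, add_zero]; exact hy) hg
      · exact ⟨y, hy, by simp only [vadd_eq_add]; rw [add_comm, ← h1, hk, hyz]⟩
  have hdisj : Disjoint (M : Set (Fin n → ZMod 2)) S := by
    rw [Set.disjoint_left]
    rintro g hgM ⟨m, hm, rfl⟩
    exact hx (by rw [show x = (x +ᵥ m) - m by simp [vadd_eq_add]]; exact M.sub_mem hgM hm)
  have hunion : (M : Set (Fin n → ZMod 2)) ∪ S = Set.univ :=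
    Set.eq_univ_of_forall hcover
  have hSM : S.ncard = (M : Set (Fin n → ZMod 2)).ncard := aux_ncard_vadd x _
  have hcardsum : (M : Set (Fin n → ZMod 2)).ncard + S.ncard = 2 ^ n := by
    rw [← Set.ncard_union_eq hdisj (Set.toFinite _) (Set.toFinite _), hunion, aux_card]
  have hScard : S.ncard = 2 ^ (n - 1) := by omega
  refine ⟨⟨⟨x, 0, M.zero_mem, by simp [vadd_eq_add]⟩, hSF, ?_⟩, hScard⟩
  intro T hT
  rcases T.eq_empty_or_nonempty with rfl | ⟨t, ht⟩
  · simp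
  · have hd : Disjoint T (t +ᵥ T) := by
      rw [Set.disjoint_left]
      rintro g hgT ⟨u, hu, rfl⟩
      exact hT t ht u hu (by simpa using hgT)
    have hle : T.ncard + T.ncard ≤ 2 ^ n := by
      have h1 : (T ∪ (t +ᵥ T)).ncard = T.ncard + T.ncard := by
        rw [Set.ncard_union_eq hd (Set.toFinite _) (Set.toFinite _), aux_ncard_vadd]
      calc T.ncard + T.ncard = (T ∪ (t +ᵥ T)).ncard := h1.symm
        _ ≤ (Set.univ : Set (Fin n → ZMod 2)).ncard :=
            Set.ncard_le_ncard (Set.subset_univ _) (Set.toFinite _)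
        _ = 2 ^ n := aux_card
    omega
end
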